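/- (Proposition 1) Let n ≥ 1, let ξ_0 ∈ ℂ with ξ_0 ≠ 0, let a_1,…,a_n be nonzero real numbers, let b_1,…,b_n be real numbers, and let χ_0 ∈ ℂ. Then the polynomial identity D(χ) = (χ − χ_0)^{n+1} holds in ℂ[χ] if and only if the b_j are pairwise distinct, χ_0 = (2ξ_0 − ∑_{j=1}^n b_j)/(n+1), and for every j, a_j² = (b_j + χ_0)^{n+1} / ( ξ_0 · ∏_{i≠j} (b_j − b_i) ). -/

import Mathlib

/-!
Write `D = (X - 2ξ₀) P + ξ₀ Q` with `P = ∏ⱼ (X + bⱼ)` and `Q / P = ∑ᵢ aᵢ² / (X + bᵢ)`. Then `D`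
is monic of degree `n + 1` with next coefficient `∑ bⱼ - 2ξ₀`, and
`D(-bⱼ) = ξ₀ aⱼ² ∏_{i ≠ j} (bᵢ - bⱼ)`. When the `bⱼ` are distinct, `D` and `(X - χ₀)^{n+1}` are
monic of degree `n + 1`, so they are equal iff their next coefficients agree and they agree at
the `n` points `-bⱼ`; these are the stated conditions on `χ₀` and on the `aⱼ²`.

If a value `β` is taken `m ≥ 2` times, `D(-β) = 0` forces `D = (X + β)^{n+1}`, so `(X + β)^m`
divides `D` and `P`, hence `Q`. But grouping the terms of `Q` by the fibres of `b` shows that `Q`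
vanishes at `-β` only to order `m - 1`, because the weight `∑_{bᵢ = β} aᵢ²` is positive.
-/

open scoped BigOperators

open Polynomial in
/-- The spectral characteristic polynomial
`D(χ) = (χ - 2ξ₀)·∏_{j=1}^n (χ + b_j) + ξ₀ · ∑_{i=1}^n a_i² · ∏_{j≠i} (χ + b_j)`. -/
noncomputable def Dpoly (n : ℕ) (ξ₀ : ℂ) (a b : Fin n → ℝ) : Polynomial ℂ :=
  (X - C (2 * ξ₀)) * ∏ j, (X + C (b j : ℂ)) +
    C ξ₀ * ∑ i, C ((a i : ℂ) ^ 2) * ∏ j ∈ Finset.univ.erase i, (X + C (b j : ℂ))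

open Polynomial Finset

theorem prod_filter_X_add_C_eq_pow {K ι : Type*} [CommRing K] [DecidableEq K] (s : Finset ι)
    (b : ι → K) (β : K) :
    ∏ j ∈ s with b j = β, (X + C (b j)) = (X + C β) ^ #{j ∈ s | b j = β} :=
  prod_eq_pow_card fun j hj => by rw [(mem_filter.1 hj).2]

section PartialFractions

variable {K ι : Type*} [Fintype ι] [DecidableEq ι]

/-- The numerator of `∑ i, w i / (X + b i)` over the common denominator `∏ j, (X + b j)`. -/
noncomputable def partialFracNum [CommRing K] (w b : ι → K) : K[X] :=
  ∑ i, C (w i) * ∏ j ∈ univ.erase i, (X + C (b j))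

theorem eval_neg_partialFracNum [CommRing K] (w b : ι → K) (m : ι) :
    (partialFracNum w b).eval (-b m) = w m * ∏ j ∈ univ.erase m, (b j - b m) := by
  rw [partialFracNum, eval_finsetSum, sum_eq_single m]
  · simp [eval_prod, neg_add_eq_sub]
  · intro i _ him
    rw [eval_mul, eval_prod, prod_eq_zero (mem_erase.2 ⟨Ne.symm him, mem_univ m⟩) (by simp),
      mul_zero]
  · simp

theorem degree_partialFracNum_lt [CommRing K] [Nontrivial K] (w b : ι → K) :
    (partialFracNum w b).degree < Fintype.card ι := by
  refine (degree_sum_le _ _).trans_lt ((Finset.sup_lt_iff (WithBot.bot_lt_coe _)).2 fun i _ => ?_)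
  calc (C (w i) * ∏ j ∈ univ.erase i, (X + C (b j))).degree
      ≤ (C (w i) * ∏ j ∈ univ.erase i, (X + C (b j))).natDegree := degree_le_natDegree
    _ ≤ (∏ j ∈ univ.erase i, (X + C (b j))).natDegree :=
      WithBot.coe_le_coe.2 (natDegree_C_mul_le _ _)
    _ = #(univ.erase i) := by
      rw [natDegree_prod_of_monic _ _ fun j _ => monic_X_add_C _]; simp
    _ < Fintype.card ι := by
      rw [card_erase_of_mem (mem_univ i), card_univ]
      exact WithBot.coe_lt_coe.2 (Nat.sub_lt (Fintype.card_pos_iff.2 ⟨i⟩) zero_lt_one)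

theorem not_pow_card_fiber_dvd_partialFracNum [CommRing K] [IsDomain K] [DecidableEq K]
    (w b : ι → K) (β : K) (hw : ∑ i with b i = β, w i ≠ 0) :
    ¬ (X + C β) ^ #{i | b i = β} ∣ partialFracNum w b := by
  set T := univ.filter (b · = β)
  have hprodT : ∏ j ∈ T, (X + C (b j)) = (X + C β) ^ #T := prod_filter_X_add_C_eq_pow _ b β
  intro hdvd
  have hfiber : (X + C β) ^ #T ∣ ∑ i ∈ T, C (w i) * ∏ j ∈ univ.erase i, (X + C (b j)) := by
    rw [partialFracNum, ← sum_filter_add_sum_filter_not univ (b · = β)] at hdvd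
    refine (dvd_add_left (dvd_sum fun i hi => dvd_mul_of_dvd_right ?_ _)).1 hdvd
    rw [← hprodT]
    exact prod_dvd_prod_of_subset _ _ _ fun j hj =>
      mem_erase.2 ⟨fun h => (mem_filter.1 hi).2 (h ▸ (mem_filter.1 hj).2), mem_univ j⟩
  set U := ∏ j with b j ≠ β, (X + C (b j)) with hUdef
  have hmul : ∀ i ∈ T, (X + C β) * ∏ j ∈ univ.erase i, (X + C (b j)) = (X + C β) ^ #T * U := by
    intro i hi
    rw [← hprodT, prod_filter_mul_prod_filter_not,
      ← mul_prod_erase univ (fun j => X + C (b j)) (mem_univ i), (mem_filter.1 hi).2]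
  have hdvdU : X + C β ∣ C (∑ i ∈ T, w i) * U := by
    have hfull : (X + C β) * ∑ i ∈ T, C (w i) * ∏ j ∈ univ.erase i, (X + C (b j)) =
        (X + C β) ^ #T * (C (∑ i ∈ T, w i) * U) := by
      rw [mul_sum, map_sum, sum_mul, mul_sum]
      exact sum_congr rfl fun i hi => by rw [mul_left_comm, hmul i hi]; ring
    rw [← mul_dvd_mul_iff_left (pow_ne_zero #T (X_add_C_ne_zero β)), ← pow_succ, ← hfull,
      pow_succ']
    exact mul_dvd_mul_left _ hfiber
  have hU : U.eval (-β) ≠ 0 := by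
    rw [hUdef, eval_prod, prod_ne_zero_iff]
    intro j hj h
    rw [eval_add, eval_X, eval_C] at h
    exact (mem_filter.1 hj).2 (by linear_combination h)
  obtain ⟨q, hq⟩ := hdvdU
  have hroot := congrArg (eval (-β)) hq
  rw [eval_mul, eval_mul, eval_add, eval_X, eval_C, eval_C, neg_add_cancel, zero_mul] at hroot
  exact mul_ne_zero hw hU hroot

end PartialFractions

section NodePolynomial

variable {K ι : Type*} [CommRing K] [Fintype ι] (c : K) (b : ι → K)

theorem monic_X_sub_C_mul_prod_X_add_C : ((X - C c) * ∏ j, (X + C (b j))).Monic :=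
  (monic_X_sub_C c).mul (monic_prod_of_monic _ _ fun j _ => monic_X_add_C (b j))

theorem natDegree_X_sub_C_mul_prod_X_add_C [Nontrivial K] :
    ((X - C c) * ∏ j, (X + C (b j))).natDegree = Fintype.card ι + 1 := by
  rw [(monic_X_sub_C c).natDegree_mul (monic_prod_of_monic _ _ fun j _ => monic_X_add_C (b j)),
    natDegree_prod_of_monic _ _ fun j _ => monic_X_add_C (b j)]
  simp [add_comm]

theorem nextCoeff_X_sub_C_mul_prod_X_add_C :
    ((X - C c) * ∏ j, (X + C (b j))).nextCoeff = ∑ j, b j - c := by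
  rw [(monic_X_sub_C c).nextCoeff_mul (monic_prod_of_monic _ _ fun j _ => monic_X_add_C (b j)),
    Monic.nextCoeff_prod _ _ fun j _ => monic_X_add_C (b j)]
  simp [nextCoeff_X_add_C, nextCoeff_X_sub_C, neg_add_eq_sub]

end NodePolynomial

theorem degree_sub_lt_of_nextCoeff_eq {R : Type*} [Ring R] {p q : R[X]} {d : ℕ}
    (hp : p.natDegree = d + 1) (hq : q.natDegree = d + 1)
    (hlead : p.leadingCoeff = q.leadingCoeff) (hnext : p.nextCoeff = q.nextCoeff) :
    (p - q).degree < d := by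
  rw [degree_lt_iff_coeff_zero]
  intro m hm
  rw [coeff_sub, sub_eq_zero]
  rcases hm.eq_or_lt with rfl | hm
  · simpa [nextCoeff_of_natDegree_pos, hp, hq] using hnext
  rcases (Nat.succ_le_of_lt hm).eq_or_lt with rfl | hm'
  · simpa [leadingCoeff, hp, hq] using hlead
  · rw [coeff_eq_zero_of_natDegree_lt (hp ▸ hm'), coeff_eq_zero_of_natDegree_lt (hq ▸ hm')]

section Dpoly

variable {n : ℕ} (ξ₀ : ℂ) (a b : Fin n → ℝ)

theorem Dpoly_eq_add : Dpoly n ξ₀ a b = (X - C (2 * ξ₀)) * ∏ j, (X + C (b j : ℂ)) +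
    C ξ₀ * partialFracNum (fun i => (a i : ℂ) ^ 2) (fun j => (b j : ℂ)) := rfl

theorem degree_C_mul_partialFracNum_lt :
    (C ξ₀ * partialFracNum (fun i => (a i : ℂ) ^ 2) (fun j => (b j : ℂ))).degree < n := by
  rw [← smul_eq_C_mul]
  simpa using (degree_smul_le ξ₀
    (partialFracNum (fun i => (a i : ℂ) ^ 2) fun j => (b j : ℂ))).trans_lt
      (degree_partialFracNum_lt _ _)

theorem degree_C_mul_partialFracNum_lt_degree :
    (C ξ₀ * partialFracNum (fun i => (a i : ℂ) ^ 2) (fun j => (b j : ℂ))).degree <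
      ((X - C (2 * ξ₀)) * ∏ j, (X + C (b j : ℂ))).degree := by
  rw [degree_eq_natDegree (monic_X_sub_C_mul_prod_X_add_C _ _).ne_zero,
    natDegree_X_sub_C_mul_prod_X_add_C, Fintype.card_fin]
  exact (degree_C_mul_partialFracNum_lt ξ₀ a b).trans (WithBot.coe_lt_coe.2 n.lt_succ_self)

theorem monic_Dpoly : (Dpoly n ξ₀ a b).Monic :=
  (monic_X_sub_C_mul_prod_X_add_C _ _).add_of_left (degree_C_mul_partialFracNum_lt_degree ξ₀ a b)

theorem natDegree_Dpoly : (Dpoly n ξ₀ a b).natDegree = n + 1 := by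
  rw [Dpoly_eq_add,
    natDegree_add_eq_left_of_degree_lt (degree_C_mul_partialFracNum_lt_degree ξ₀ a b),
    natDegree_X_sub_C_mul_prod_X_add_C, Fintype.card_fin]

theorem nextCoeff_Dpoly : (Dpoly n ξ₀ a b).nextCoeff = ∑ j, (b j : ℂ) - 2 * ξ₀ := by
  have hlead := natDegree_X_sub_C_mul_prod_X_add_C (2 * ξ₀) (fun j => (b j : ℂ))
  rw [Fintype.card_fin] at hlead
  rw [nextCoeff_of_natDegree_pos (by rw [natDegree_Dpoly]; omega), natDegree_Dpoly,
    Nat.add_sub_cancel, Dpoly_eq_add, coeff_add,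
    coeff_eq_zero_of_degree_lt (degree_C_mul_partialFracNum_lt ξ₀ a b), add_zero,
    ← nextCoeff_X_sub_C_mul_prod_X_add_C, nextCoeff_of_natDegree_pos (by omega), hlead,
    Nat.add_sub_cancel]

theorem eval_neg_Dpoly (m : Fin n) : (Dpoly n ξ₀ a b).eval (-(b m : ℂ)) =
    (-1) ^ (n + 1) * (ξ₀ * (a m : ℂ) ^ 2 * ∏ i ∈ univ.erase m, ((b m : ℂ) - (b i : ℂ))) := by
  obtain ⟨k, rfl⟩ : ∃ k, n = k + 1 := ⟨n - 1, by have := m.pos; omega⟩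
  have hnode : (∏ j, (X + C (b j : ℂ))).eval (-(b m : ℂ)) = 0 := by
    rw [eval_prod]
    exact prod_eq_zero (mem_univ m) (by simp)
  rw [Dpoly_eq_add, eval_add, eval_mul, hnode, mul_zero, zero_add, eval_mul, eval_C,
    eval_neg_partialFracNum (fun i => (a i : ℂ) ^ 2) (fun j => (b j : ℂ)) m]
  simp_rw [← neg_sub (b m : ℂ), prod_neg, card_erase_of_mem (mem_univ m), card_univ,
    Fintype.card_fin, Nat.add_sub_cancel]
  ring

theorem eval_neg_Dpoly_eq_iff (hξ₀ : ξ₀ ≠ 0) (hb : Function.Injective b) (χ₀ : ℂ) (j : Fin n) :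
    (Dpoly n ξ₀ a b).eval (-(b j : ℂ)) = ((X - C χ₀) ^ (n + 1)).eval (-(b j : ℂ)) ↔
      (a j : ℂ) ^ 2 =
        ((b j : ℂ) + χ₀) ^ (n + 1) / (ξ₀ * ∏ i ∈ univ.erase j, ((b j : ℂ) - (b i : ℂ))) := by
  have hprod : ∏ i ∈ univ.erase j, ((b j : ℂ) - (b i : ℂ)) ≠ 0 :=
    prod_ne_zero_iff.2 fun i hi =>
      sub_ne_zero.2 (by exact_mod_cast hb.ne (ne_of_mem_erase hi).symm)
  rw [eval_neg_Dpoly, eval_pow, eval_sub, eval_X, eval_C,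
    show -(b j : ℂ) - χ₀ = -1 * ((b j : ℂ) + χ₀) by ring, mul_pow,
    mul_right_inj' (pow_ne_zero _ (neg_ne_zero.2 one_ne_zero)),
    eq_div_iff (mul_ne_zero hξ₀ hprod)]
  constructor <;> intro h <;> linear_combination h

theorem nextCoeff_Dpoly_eq_iff (χ₀ : ℂ) :
    (Dpoly n ξ₀ a b).nextCoeff = ((X - C χ₀) ^ (n + 1)).nextCoeff ↔
      χ₀ = (2 * ξ₀ - ∑ j, (b j : ℂ)) / (n + 1) := by
  rw [nextCoeff_Dpoly, (monic_X_sub_C χ₀).nextCoeff_pow, nextCoeff_X_sub_C, nsmul_eq_mul,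
    eq_div_iff (Nat.cast_add_one_ne_zero n)]
  push_cast
  constructor <;> intro h <;> linear_combination h

theorem injective_of_Dpoly_eq_pow (hξ₀ : ξ₀ ≠ 0) (ha : ∀ j, a j ≠ 0) {χ₀ : ℂ}
    (hD : Dpoly n ξ₀ a b = (X - C χ₀) ^ (n + 1)) : Function.Injective b := by
  classical
  intro j k hjk
  by_contra hne
  set β : ℂ := ↑(b j)
  have hχ₀ : χ₀ = -β := by
    have h := eval_neg_Dpoly ξ₀ a b j
    rw [hD, prod_eq_zero (mem_erase.2 ⟨Ne.symm hne, mem_univ k⟩) (by rw [hjk, sub_self]),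
      mul_zero, mul_zero, eval_pow, eval_sub, eval_X, eval_C] at h
    linear_combination -(pow_eq_zero_iff (Nat.succ_ne_zero n)).1 h
  have hdvd : (X + C β) ^ #{i | (b i : ℂ) = β} ∣
      partialFracNum (fun i => (a i : ℂ) ^ 2) (fun i => (b i : ℂ)) := by
    have hdvdD : (X + C β) ^ #{i | (b i : ℂ) = β} ∣ Dpoly n ξ₀ a b := by
      rw [hD, hχ₀, map_neg, sub_neg_eq_add]
      exact pow_dvd_pow _ ((card_filter_le _ _).trans (by simp))
    have hdvdP : (X + C β) ^ #{i | (b i : ℂ) = β} ∣ ∏ j, (X + C (b j : ℂ)) := by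
      rw [← prod_filter_X_add_C_eq_pow]
      exact prod_dvd_prod_of_subset _ _ _ (filter_subset _ _)
    rw [Dpoly_eq_add] at hdvdD
    exact (isUnit_C.2 hξ₀.isUnit).dvd_mul_left.1
      ((dvd_add_right (dvd_mul_of_dvd_right hdvdP _)).1 hdvdD)
  refine not_pow_card_fiber_dvd_partialFracNum _ _ β ?_ hdvd
  have hpos : 0 < ∑ i with (b i : ℂ) = β, a i ^ 2 :=
    sum_pos (fun i _ => by have := ha i; positivity) ⟨j, by simp [β]⟩
  exact_mod_cast hpos.ne'

end Dpoly

open Polynomial in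
theorem Dpoly_eq_pow_iff (n : ℕ) (ξ₀ : ℂ) (hξ₀ : ξ₀ ≠ 0)
    (a b : Fin n → ℝ) (ha : ∀ j, a j ≠ 0) (χ₀ : ℂ) :
    Dpoly n ξ₀ a b = (X - C χ₀) ^ (n + 1) ↔
      Function.Injective b ∧
        χ₀ = (2 * ξ₀ - ∑ j, (b j : ℂ)) / (n + 1) ∧
        ∀ j, (a j : ℂ) ^ 2 =
          ((b j : ℂ) + χ₀) ^ (n + 1) /
            (ξ₀ * ∏ i ∈ Finset.univ.erase j, ((b j : ℂ) - (b i : ℂ))) := by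
  constructor
  · intro hD
    have hb := injective_of_Dpoly_eq_pow ξ₀ a b hξ₀ ha hD
    exact ⟨hb, (nextCoeff_Dpoly_eq_iff ξ₀ a b χ₀).1 (congrArg nextCoeff hD),
      fun j => (eval_neg_Dpoly_eq_iff ξ₀ a b hξ₀ hb χ₀ j).1 (congrArg (eval _) hD)⟩
  · rintro ⟨hb, hχ₀, ha₂⟩
    refine eq_of_degree_sub_lt_of_eval_index_eq (v := fun j => -(b j : ℂ)) univ
      (fun i _ j _ h => hb (by simpa using h)) ?_
      fun j _ => (eval_neg_Dpoly_eq_iff ξ₀ a b hξ₀ hb χ₀ j).2 (ha₂ j)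
    rw [card_univ, Fintype.card_fin]
    exact degree_sub_lt_of_nextCoeff_eq (natDegree_Dpoly ξ₀ a b)
      (by rw [natDegree_pow, natDegree_X_sub_C, mul_one])
      (by rw [(monic_Dpoly ξ₀ a b).leadingCoeff, ((monic_X_sub_C χ₀).pow _).leadingCoeff])
      ((nextCoeff_Dpoly_eq_iff ξ₀ a b χ₀).2 hχ₀)
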